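/- Let k ≥ 2 and ℓ ≥ 6k be integers, and let u = (u_1,…,u_k, u_{ℓ−k+1},…,u_ℓ) be the 2k-tuple consisting of the first k and last k vertices of the (k,ℓ)-connecting-path CP^k_ℓ. Then m(CP^k_ℓ, u) ≤ k + 8k^3/ℓ. -/

import Mathlib

open MeasureTheory Finset

/-- The Bernoulli measure on `Bool` with parameter `p`. -/
noncomputable def bern (p : ℝ) : Measure Bool :=
  ENNReal.ofReal p • Measure.dirac true + ENNReal.ofReal (1 - p) • Measure.dirac false

instance bernFinite (p : ℝ) : IsFiniteMeasure (bern p) := by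
  constructor
  simp only [bern, Measure.add_apply, Measure.smul_apply, smul_eq_mul, measure_univ, mul_one]
  exact ENNReal.add_lt_top.2 ⟨ENNReal.ofReal_lt_top, ENNReal.ofReal_lt_top⟩

/-- Product Bernoulli measure: independent `p`-coins indexed by `ι`. -/
noncomputable def prodBern (ι : Type*) [Fintype ι] (p : ℝ) : Measure (ι → Bool) :=
  Measure.pi fun _ => bern p

/-- Cyclic addition on `Fin n`. -/
def rotAdd {n : ℕ} (i : Fin n) (d : ℕ) : Fin n := ⟨(i.val + d) % n, Nat.mod_lt _ i.pos⟩

/-- A (hyper)graph: a finite vertex set together with a finite set of edges. -/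
structure HGraph (V : Type*) where
  verts : Finset V
  edges : Finset (Finset V)

namespace HGraph

variable {V W : Type*}

/-- Well-formedness: every edge is a set of vertices. -/
def Wf (H : HGraph V) : Prop := ∀ e ∈ H.edges, e ⊆ H.verts

/-- Number of vertices `v(H)`. -/
def vcount (H : HGraph V) : ℕ := H.verts.card

/-- Number of edges `e(H)`. -/
def ecount (H : HGraph V) : ℕ := H.edges.card

/-- `H` is `k`-uniform: every edge has exactly `k` vertices. -/
def IsUniform (k : ℕ) (H : HGraph V) : Prop := ∀ e ∈ H.edges, e.card = k

/-- `H'` is a sub(hyper)graph of `H`. -/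
def IsSub (H' H : HGraph V) : Prop := H'.verts ⊆ H.verts ∧ H'.edges ⊆ H.edges

/-- A set of vertices is independent if it contains no edge. -/
def IsIndepSet (H : HGraph V) (s : Finset V) : Prop := ∀ e ∈ H.edges, ¬ e ⊆ s

/-- `f` is an isomorphism from `F` onto `F'`. -/
def IsIso [DecidableEq W] (f : V → W) (F : HGraph V) (F' : HGraph W) : Prop :=
  Set.InjOn f ↑F.verts ∧ F.verts.image f = F'.verts ∧
    F.edges.image (fun e => e.image f) = F'.edges

/-- `F'` is an `(F, x, y)`-copy inside `G`: a subgraph of `G` isomorphic to `F`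
via an isomorphism sending the tuple `x` (coordinatewise) to the tuple `y`. -/
def IsCopy [DecidableEq W] (G : HGraph W) (F : HGraph V) {r : ℕ}
    (x : Fin r → V) (y : Fin r → W) (F' : HGraph W) : Prop :=
  F'.IsSub G ∧ ∃ f : V → W, IsIso f F F' ∧ ∀ j, f (x j) = y j

/-- The `m(F, X)`-density. -/
noncomputable def mDensity [DecidableEq V] (F : HGraph V) (X : Finset V) : ℝ :=
  sSup {q : ℝ | ∃ F' : HGraph V, F'.IsSub F ∧ F'.Wf ∧ 0 < F'.ecount ∧
    (X ⊆ F'.verts ∨ X ∩ F'.verts = ∅) ∧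
    q = (F'.ecount : ℝ) / ((F'.vcount : ℝ) - max 1 ((F'.verts ∩ X).card : ℝ))}

/-- The `m_1`-density. -/
noncomputable def m1 [DecidableEq V] (F : HGraph V) : ℝ := mDensity F ∅

/-- `H` is `k`-degenerate: there is an ordering of the vertices such that each vertex
closes at most `k` edges lying entirely among it and earlier vertices. -/
def IsDegenerate [DecidableEq V] (k : ℕ) (H : HGraph V) : Prop :=
  ∃ (h : ℕ) (v : Fin h → V), Function.Injective v ∧ Finset.univ.image v = H.verts ∧
    ∀ i : Fin h,
      (H.edges.filter (fun e => v i ∈ e ∧ ∀ u ∈ e, ∃ j : Fin h, j ≤ i ∧ v j = u)).card ≤ k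

end HGraph

/-- The `k`-uniform hypergraph on `[n]` determined by a boolean choice for each
`k`-element subset. -/
def hyperOf (n k : ℕ) (ω : {s : Finset (Fin n) // s.card = k} → Bool) : HGraph (Fin n) where
  verts := Finset.univ
  edges := (Finset.univ.filter (fun s : {s : Finset (Fin n) // s.card = k} => ω s = true)).image
    Subtype.val

/-- The graph on `[n]` determined by a boolean choice for each unordered pair. -/
def graphOf (n : ℕ) (ω : Sym2 (Fin n) → Bool) : HGraph (Fin n) where
  verts := Finset.univ
  edges := Finset.univ.filter
    (fun s : Finset (Fin n) => ∃ u v : Fin n, u ≠ v ∧ s = {u, v} ∧ ω s(u, v) = true)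

/-- The `k`-th power of a path on the `m`-tuple `u(0), …, u(m-1)`. -/
def powerPathOn {V : Type*} [DecidableEq V] (k m : ℕ) (u : ℕ → V) : HGraph V where
  verts := (Finset.range m).image u
  edges := ((Finset.range m ×ˢ Finset.range m).filter
      (fun ij => ij.1 < ij.2 ∧ ij.2 ≤ ij.1 + k)).image (fun ij => {u ij.1, u ij.2})

/-- The `(k, m)`-tight-path (a `(k+1)`-uniform hypergraph) on the tuple `u(0), …, u(m-1)`. -/
def tightPathOn {V : Type*} [DecidableEq V] (k m : ℕ) (u : ℕ → V) : HGraph V where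
  verts := (Finset.range m).image u
  edges := (Finset.range (m - k)).image (fun i => (Finset.Icc i (i + k)).image u)

/-- The `(k, m)`-path `P^k_m` on vertex set `{0, …, m-1}`. -/
def powerPath (k m : ℕ) : HGraph ℕ := powerPathOn k m id

/-- The `(k, m)`-tight-path `H^k_m` on vertex set `{0, …, m-1}`. -/
def tightPath (k m : ℕ) : HGraph ℕ := tightPathOn k m id

/-- The `(k, m)`-connecting-path `CP^k_m` on vertex set `{0, …, m-1}`:
the `(k,m)`-path with all edges inside the first `k` or inside the last `k`
vertices removed. -/
def connPath (k m : ℕ) : HGraph ℕ where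
  verts := Finset.range m
  edges := ((Finset.range m ×ˢ Finset.range m).filter
      (fun ij => ij.1 < ij.2 ∧ ij.2 ≤ ij.1 + k ∧
        ((k ≤ ij.1 ∧ ij.1 < m - k) ∨ (k ≤ ij.2 ∧ ij.2 < m - k)))).image
      (fun ij => ({ij.1, ij.2} : Finset ℕ))

/-- The `2k`-tuple consisting of the first `k` and the last `k` vertices of a path
on vertex set `{0, …, m-1}`. -/
def endsTuple (k m : ℕ) : Fin (k + k) → ℕ :=
  Fin.append (fun j : Fin k => (j : ℕ)) (fun j : Fin k => m - k + (j : ℕ))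

/-- `A` is an `(a, b, X)`-absorber (with respect to the family of paths `Pfam`,
e.g. `powerPath k` or `tightPath k`): for every `X' ⊆ X` there is a path from `a`
to `b` in `A` whose vertex set is `V(A) \ X'`. -/
def HGraph.IsAbsorber {V : Type*} [DecidableEq V] (k : ℕ) (Pfam : ℕ → HGraph ℕ)
    (A : HGraph V) (a b : Fin k → V) (X : Finset V) : Prop :=
  ∀ X' ⊆ X, ∃ m : ℕ, 2 * k ≤ m ∧ ∃ P : HGraph V,
    A.IsCopy (Pfam m) (endsTuple k m) (Fin.append a b) P ∧ P.verts = A.verts \ X'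

/-- The vertex `w_{i,j}` of the backbone graph, coded as a natural number
(`x` is coded as `0`). -/
def bw (k i j : ℕ) : ℕ := 1 + (i - 1) * (2 * k) + (j - 1)

/-- The `(2k+1)`-tuple `(w_1^a, x, w_1^b)`. -/
def bt1 (k : ℕ) : ℕ → ℕ := fun t => if t < k then bw k 1 (t + 1) else if t = k then 0 else bw k 1 t

/-- The `2k`-tuple `(w_i^a, w_i^b)`. -/
def bt2 (k i : ℕ) : ℕ → ℕ := fun t => bw k i (t + 1)

/-- The `2k`-tuple `(w_2^a, reverse of w_1^a)`. -/
def bt3 (k : ℕ) : ℕ → ℕ := fun t => if t < k then bw k 2 (t + 1) else bw k 1 (2 * k - t)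

/-- The `2k`-tuple `(w_{i+2}^a, w_i^b)`. -/
def bt4 (k i : ℕ) : ℕ → ℕ := fun t => if t < k then bw k (i + 2) (t + 1) else bw k i (t + 1)

/-- The `2k`-tuple `(reverse of w_ℓ^b, w_{ℓ-1}^b)`. -/
def bt5 (k ℓ : ℕ) : ℕ → ℕ := fun t => if t < k then bw k ℓ (2 * k - t) else bw k (ℓ - 1) (t + 1)

/-- The backbone graph `B^k_ℓ`. -/
def bbG (k ℓ : ℕ) : HGraph ℕ where
  verts := Finset.range (2 * k * ℓ + 1)
  edges := (powerPathOn k (2 * k + 1) (bt1 k)).edges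
    ∪ (Finset.Icc 2 ℓ).biUnion (fun i => (powerPathOn k (2 * k) (bt2 k i)).edges)
    ∪ (powerPathOn k (2 * k) (bt3 k)).edges
    ∪ (Finset.Icc 1 (ℓ - 2)).biUnion (fun i => (powerPathOn k (2 * k) (bt4 k i)).edges)
    ∪ (powerPathOn k (2 * k) (bt5 k ℓ)).edges

/-- The backbone `(k+1)`-uniform hypergraph `BH^k_ℓ`. -/
def bbH (k ℓ : ℕ) : HGraph ℕ where
  verts := Finset.range (2 * k * ℓ + 1)
  edges := (tightPathOn k (2 * k + 1) (bt1 k)).edges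
    ∪ (Finset.Icc 2 ℓ).biUnion (fun i => (tightPathOn k (2 * k) (bt2 k i)).edges)
    ∪ (tightPathOn k (2 * k) (bt3 k)).edges
    ∪ (Finset.Icc 1 (ℓ - 2)).biUnion (fun i => (tightPathOn k (2 * k) (bt4 k i)).edges)
    ∪ (tightPathOn k (2 * k) (bt5 k ℓ)).edges


lemma pair_max_unbot {i j : ℕ} (h : i < j) : WithBot.unbotD 0 ({i, j} : Finset ℕ).max = j := by
  rw [Finset.max_insert, Finset.max_singleton, ← WithBot.coe_sup]
  simp [sup_eq_right.mpr h.le]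

lemma pair_min_untop {i j : ℕ} (h : i < j) : WithTop.untopD 0 ({i, j} : Finset ℕ).min = i := by
  rw [Finset.min_insert, Finset.min_singleton, ← WithTop.coe_inf]
  rw [inf_eq_left.mpr h.le, WithTop.untopD_coe]

lemma card_le_max_charge {k : ℕ} (s : Finset (Finset ℕ)) (T : Finset ℕ)
    (h : ∀ E ∈ s, ∃ i j, i < j ∧ j ≤ i + k ∧ E = {i, j} ∧ j ∈ T) :
    s.card ≤ T.card * k := by
  classical
  have hb : s.card ≤ (T ×ˢ Finset.Icc 1 k).card := by
    apply Finset.card_le_card_of_injOn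
      (fun E => (WithBot.unbotD 0 E.max, WithBot.unbotD 0 E.max - WithTop.untopD 0 E.min))
    · intro E hE
      obtain ⟨i, j, hij, hjk, rfl, hT⟩ := h E hE
      simp only [Finset.mem_coe]
      rw [pair_max_unbot hij, pair_min_untop hij]
      simp only [Finset.mem_product, Finset.mem_Icc]
      exact ⟨hT, by omega, by omega⟩
    · intro E hE E' hE' heq
      obtain ⟨i, j, hij, hjk, rfl, -⟩ := h E hE
      obtain ⟨i', j', hij', hjk', rfl, -⟩ := h E' hE'
      simp only [pair_max_unbot hij, pair_min_untop hij, pair_max_unbot hij',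
        pair_min_untop hij', Prod.mk.injEq] at heq
      have : i = i' ∧ j = j' := by omega
      rw [this.1, this.2]
  rwa [Finset.card_product, Nat.card_Icc, Nat.add_sub_cancel] at hb

lemma card_le_min_charge {k : ℕ} (s : Finset (Finset ℕ)) (T : Finset ℕ)
    (h : ∀ E ∈ s, ∃ i j, i < j ∧ j ≤ i + k ∧ E = {i, j} ∧ i ∈ T) :
    s.card ≤ T.card * k := by
  classical
  have hb : s.card ≤ (T ×ˢ Finset.Icc 1 k).card := by
    apply Finset.card_le_card_of_injOn
      (fun E => (WithTop.untopD 0 E.min, WithBot.unbotD 0 E.max - WithTop.untopD 0 E.min))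
    · intro E hE
      obtain ⟨i, j, hij, hjk, rfl, hT⟩ := h E hE
      simp only [Finset.mem_coe]
      rw [pair_max_unbot hij, pair_min_untop hij]
      simp only [Finset.mem_product, Finset.mem_Icc]
      exact ⟨hT, by omega, by omega⟩
    · intro E hE E' hE' heq
      obtain ⟨i, j, hij, hjk, rfl, -⟩ := h E hE
      obtain ⟨i', j', hij', hjk', rfl, -⟩ := h E' hE'
      simp only [pair_max_unbot hij, pair_min_untop hij, pair_max_unbot hij',
        pair_min_untop hij', Prod.mk.injEq] at heq
      have : i = i' ∧ j = j' := by omega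
      rw [this.1, this.2]
  rwa [Finset.card_product, Nat.card_Icc, Nat.add_sub_cancel] at hb
lemma endsTuple_image (k ℓ : ℕ) (hℓ : k ≤ ℓ) :
    Finset.image (endsTuple k ℓ) Finset.univ =
      Finset.range k ∪ Finset.Ico (ℓ - k) ℓ := by
  ext t
  simp only [Finset.mem_image, Finset.mem_union, Finset.mem_range, Finset.mem_Ico,
    Finset.mem_univ, true_and]
  constructor
  · rintro ⟨i, rfl⟩
    unfold endsTuple
    by_cases h : (i : ℕ) < k
    · left
      rw [show i = Fin.castAdd k ⟨(i : ℕ), h⟩ from by ext; simp, Fin.append_left]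
      exact h
    · right
      have h2 : (i : ℕ) - k < k := by omega
      rw [show i = Fin.natAdd k ⟨(i : ℕ) - k, h2⟩ from by ext; simp; omega, Fin.append_right]
      simp
      omega
  · rintro (h | h)
    · exact ⟨Fin.castAdd k ⟨t, h⟩, by rw [endsTuple, Fin.append_left]⟩
    · refine ⟨Fin.natAdd k ⟨t - (ℓ - k), by omega⟩, ?_⟩
      rw [endsTuple, Fin.append_right]
      simp
      omega

lemma connPath_edge_form {k ℓ : ℕ} {E : Finset ℕ} (h : E ∈ (connPath k ℓ).edges) :
    ∃ i j, i < j ∧ j ≤ i + k ∧ j < ℓ ∧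
      ((k ≤ i ∧ i < ℓ - k) ∨ (k ≤ j ∧ j < ℓ - k)) ∧ E = {i, j} := by
  unfold connPath at h
  simp only [Finset.mem_image, Finset.mem_filter, Finset.mem_product, Finset.mem_range] at h
  obtain ⟨⟨i, j⟩, ⟨⟨-, hj⟩, h1, h2, h3⟩, rfl⟩ := h
  exact ⟨i, j, h1, h2, hj, h3, rfl⟩
/-- The density of the connecting path relative to its ends:
`m(CP^k_ℓ, u) ≤ k + 8k³/ℓ` for `ℓ ≥ 6k`. -/
theorem connPath_density (k ℓ : ℕ) (hk : 2 ≤ k) (hℓ : 6 * k ≤ ℓ) :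
    (connPath k ℓ).mDensity (Finset.image (endsTuple k ℓ) Finset.univ) ≤
      (k : ℝ) + 8 * (k : ℝ) ^ 3 / (ℓ : ℝ) := by
  classical
  have hℓ0 : (0 : ℝ) < ℓ := by exact_mod_cast (by omega : 0 < ℓ)
  have hBnn : (0 : ℝ) ≤ (k : ℝ) + 8 * (k : ℝ) ^ 3 / (ℓ : ℝ) := by positivity
  set X : Finset ℕ := Finset.image (endsTuple k ℓ) Finset.univ with hXdef
  have hXeq : X = Finset.range k ∪ Finset.Ico (ℓ - k) ℓ := endsTuple_image k ℓ (by omega)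
  have hXmem : ∀ t, t ∈ X ↔ (t < k ∨ (ℓ - k ≤ t ∧ t < ℓ)) := by
    intro t; rw [hXeq]; simp [Finset.mem_union]
  have hXcard : X.card = 2 * k := by
    rw [hXeq, Finset.card_union_of_disjoint, Finset.card_range, Nat.card_Ico]
    · omega
    · rw [Finset.disjoint_left]
      intro t ht ht'
      simp only [Finset.mem_range] at ht
      simp only [Finset.mem_Ico] at ht'
      omega
  rw [HGraph.mDensity]
  apply Real.sSup_le _ hBnn
  rintro q ⟨F', hsub, hwf, hec, hXc, rfl⟩
  obtain ⟨hsubV, hsubE⟩ := hsub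
  have hedge : ∀ E ∈ F'.edges, ∃ i j, i < j ∧ j ≤ i + k ∧ j < ℓ ∧
      ((k ≤ i ∧ i < ℓ - k) ∨ (k ≤ j ∧ j < ℓ - k)) ∧ E = {i, j} ∧
      i ∈ F'.verts ∧ j ∈ F'.verts := by
    intro E hE
    obtain ⟨i, j, h1, h2, h3, h4, h5⟩ := connPath_edge_form (hsubE hE)
    have hEv := hwf E hE
    subst h5
    exact ⟨i, j, h1, h2, h3, h4, rfl, hEv (by simp), hEv (by simp)⟩
  obtain ⟨E₀, hE₀⟩ := Finset.card_pos.mp hec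
  obtain ⟨i₀, j₀, hij₀, hjk₀, hjℓ₀, hmid₀, hE₀eq, hiv₀, hjv₀⟩ := hedge E₀ hE₀
  have hvrange : ∀ t ∈ F'.verts, t < ℓ := by
    intro t ht
    have := hsubV ht
    simpa [connPath] using this
  rcases hXc with hXsub | hXdisj
  · -- Case B : X ⊆ verts
    set M : Finset ℕ := F'.verts.filter (fun p => k ≤ p ∧ p < ℓ - k) with hMdef
    set m : ℕ := M.card with hmdef
    have hMmem : ∀ p, p ∈ M ↔ (p ∈ F'.verts ∧ k ≤ p ∧ p < ℓ - k) := by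
      intro p; rw [hMdef]; simp [Finset.mem_filter]
    have hvM : F'.vcount = m + 2 * k := by
      have hU : F'.verts = M ∪ X := by
        ext t
        rw [Finset.mem_union, hMmem, hXmem]
        constructor
        · intro ht
          have htℓ := hvrange t ht
          by_cases hm : k ≤ t ∧ t < ℓ - k
          · exact Or.inl ⟨ht, hm⟩
          · exact Or.inr (by omega)
        · rintro (⟨ht, -⟩ | ht)
          · exact ht
          · exact hXsub ((hXmem t).mpr ht)
      have hdisj : Disjoint M X := by
        rw [Finset.disjoint_left]
        intro p hp hp'
        rw [hMmem] at hp
        rw [hXmem] at hp'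
        omega
      rw [HGraph.vcount, hU, Finset.card_union_of_disjoint hdisj, hXcard, hmdef]
    have hm1 : 1 ≤ m := by
      rw [hmdef]
      apply Finset.card_pos.mpr
      rcases hmid₀ with h | h
      · exact ⟨i₀, (hMmem i₀).mpr ⟨hiv₀, h⟩⟩
      · exact ⟨j₀, (hMmem j₀).mpr ⟨hjv₀, h⟩⟩
    have hcap : F'.verts ∩ X = X := Finset.inter_eq_right.mpr hXsub
    have hden : (F'.vcount : ℝ) - max 1 ((F'.verts ∩ X).card : ℝ) = (m : ℝ) := by
      rw [hcap, hXcard, hvM]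
      rw [max_eq_right (by exact_mod_cast (by omega : 1 ≤ 2 * k))]
      push_cast
      ring
    have hmpos : (0 : ℝ) < (m : ℝ) := by exact_mod_cast hm1
    rw [hden, div_le_iff₀ hmpos]
    by_cases hcase : ℓ ≤ 8 * k * m
    · -- dense case : e ≤ m*k + k*k
      have hsplit := Finset.card_filter_add_card_filter_not
        (s := F'.edges) (p := fun E => WithBot.unbotD 0 E.max < ℓ - k)
      have h1 : (F'.edges.filter (fun E => WithBot.unbotD 0 E.max < ℓ - k)).card ≤ m * k := by
        rw [hmdef]
        apply card_le_max_charge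
        intro E hE
        rw [Finset.mem_filter] at hE
        obtain ⟨i, j, hij, hjk, hjℓ, hmid, rfl, hiv, hjv⟩ := hedge E hE.1
        have hmax := hE.2
        rw [pair_max_unbot hij] at hmax
        exact ⟨i, j, hij, hjk, rfl, (hMmem j).mpr ⟨hjv, by omega, hmax⟩⟩
      have h2 : (F'.edges.filter (fun E => ¬ WithBot.unbotD 0 E.max < ℓ - k)).card ≤ k * k := by
        have hIco : (Finset.Ico (ℓ - k) ℓ).card = k := by rw [Nat.card_Ico]; omega
        have h2' : (F'.edges.filter (fun E => ¬ WithBot.unbotD 0 E.max < ℓ - k)).card ≤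
            (Finset.Ico (ℓ - k) ℓ).card * k := by
          apply card_le_max_charge
          intro E hE
          rw [Finset.mem_filter] at hE
          obtain ⟨i, j, hij, hjk, hjℓ, hmid, rfl, hiv, hjv⟩ := hedge E hE.1
          have hmax := hE.2
          rw [pair_max_unbot hij] at hmax
          exact ⟨i, j, hij, hjk, rfl, Finset.mem_Ico.mpr ⟨by omega, hjℓ⟩⟩
        rwa [hIco] at h2'
      have he : F'.ecount ≤ m * k + k * k := by
        have : F'.ecount = _ + _ := hsplit.symm
        rw [HGraph.ecount]
        omega
      have heR : (F'.ecount : ℝ) ≤ (m : ℝ) * k + (k : ℝ) * k := by exact_mod_cast he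
      have hcR : (ℓ : ℝ) ≤ 8 * (k : ℝ) * m := by exact_mod_cast hcase
      have key : (k : ℝ) * k ≤ 8 * (k : ℝ) ^ 3 / (ℓ : ℝ) * m := by
        rw [div_mul_eq_mul_div, le_div_iff₀ hℓ0]
        nlinarith [mul_le_mul_of_nonneg_left hcR (by positivity : (0:ℝ) ≤ (k:ℝ) * k)]
      calc (F'.ecount : ℝ) ≤ (m : ℝ) * k + (k : ℝ) * k := heR
        _ ≤ (k : ℝ) * m + 8 * (k : ℝ) ^ 3 / (ℓ : ℝ) * m := by
            rw [mul_comm (m : ℝ) (k : ℝ)]; linarith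
        _ = ((k : ℝ) + 8 * (k : ℝ) ^ 3 / (ℓ : ℝ)) * m := by ring
    · -- sparse case : empty window exists, e ≤ m*k
      push_neg at hcase
      have hwin : ∃ w, k ≤ w ∧ w + k ≤ ℓ - k ∧ ∀ p ∈ M, ¬ (w ≤ p ∧ p < w + k) := by
        have hpos : 0 < ((Finset.range (m + 1)) \ (M.image fun p => (p - k) / k)).card := by
          have h1 := Finset.le_card_sdiff (M.image fun p => (p - k) / k)
            (Finset.range (m + 1))
          have h2 : (M.image fun p => (p - k) / k).card ≤ m := by
            rw [hmdef]; exact Finset.card_image_le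
          rw [Finset.card_range] at h1
          omega
        obtain ⟨j, hj⟩ := Finset.card_pos.mp hpos
        rw [Finset.mem_sdiff, Finset.mem_range] at hj
        have hjm : j ≤ m := by omega
        refine ⟨k + j * k, by omega, ?_, ?_⟩
        · have hjk3 : (j + 3) * k ≤ 8 * k * m := by
            have h3 : j + 3 ≤ 8 * m := by omega
            calc (j + 3) * k ≤ (8 * m) * k := Nat.mul_le_mul_right _ h3
              _ = 8 * k * m := by ring
          have hexp : (j + 3) * k = j * k + k + k + k := by ring
          omega
        · intro p hp hcontra
          apply hj.2
          refine Finset.mem_image.mpr ⟨p, hp, ?_⟩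
          have hexp2 : (j + 1) * k = j * k + k := by ring
          exact Nat.div_eq_of_lt_le (by omega) (by omega)
      obtain ⟨w, hw1, hw2, hwempty⟩ := hwin
      have hsplit := Finset.card_filter_add_card_filter_not
        (s := F'.edges) (p := fun E => WithBot.unbotD 0 E.max < w)
      have h1 : (F'.edges.filter (fun E => WithBot.unbotD 0 E.max < w)).card ≤
          (M.filter (fun p => p < w)).card * k := by
        apply card_le_max_charge
        intro E hE
        rw [Finset.mem_filter] at hE
        obtain ⟨i, j, hij, hjk, hjℓ, hmid, rfl, hiv, hjv⟩ := hedge E hE.1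
        have hmax := hE.2
        rw [pair_max_unbot hij] at hmax
        refine ⟨i, j, hij, hjk, rfl, Finset.mem_filter.mpr ⟨(hMmem j).mpr ⟨hjv, by omega, by omega⟩, hmax⟩⟩
      have h2 : (F'.edges.filter (fun E => ¬ WithBot.unbotD 0 E.max < w)).card ≤
          (M.filter (fun p => w + k ≤ p)).card * k := by
        apply card_le_min_charge
        intro E hE
        rw [Finset.mem_filter] at hE
        obtain ⟨i, j, hij, hjk, hjℓ, hmid, rfl, hiv, hjv⟩ := hedge E hE.1
        have hmax := hE.2
        rw [pair_max_unbot hij] at hmax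
        have hjw : w + k ≤ j := by
          by_contra hc2
          exact hwempty j ((hMmem j).mpr ⟨hjv, by omega, by omega⟩) ⟨by omega, by omega⟩
        have hiw : w + k ≤ i := by
          by_contra hc2
          exact hwempty i ((hMmem i).mpr ⟨hiv, by omega, by omega⟩) ⟨by omega, by omega⟩
        exact ⟨i, j, hij, hjk, rfl,
          Finset.mem_filter.mpr ⟨(hMmem i).mpr ⟨hiv, by omega, by omega⟩, hiw⟩⟩
      have hT12 : (M.filter (fun p => p < w)).card +
          (M.filter (fun p => w + k ≤ p)).card ≤ m := by
        rw [← Finset.card_union_of_disjoint (by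
          rw [Finset.disjoint_left]
          intro p hp hp'
          rw [Finset.mem_filter] at hp hp'
          omega)]
        rw [hmdef]
        exact Finset.card_le_card
          (Finset.union_subset (Finset.filter_subset _ _) (Finset.filter_subset _ _))
      have he : F'.ecount ≤ m * k := by
        rw [HGraph.ecount]
        calc F'.edges.card = _ := hsplit.symm
          _ ≤ (M.filter (fun p => p < w)).card * k +
              (M.filter (fun p => w + k ≤ p)).card * k := Nat.add_le_add h1 h2
          _ = ((M.filter (fun p => p < w)).card +
              (M.filter (fun p => w + k ≤ p)).card) * k := by ring
          _ ≤ m * k := Nat.mul_le_mul_right _ hT12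
      have heR : (F'.ecount : ℝ) ≤ (m : ℝ) * k := by exact_mod_cast he
      have hnn : (0 : ℝ) ≤ 8 * (k : ℝ) ^ 3 / (ℓ : ℝ) := by positivity
      nlinarith [mul_nonneg hnn hmpos.le]
  · -- Case A : X ∩ verts = ∅
    have hcap : F'.verts ∩ X = ∅ := by rwa [Finset.inter_comm]
    have hne : F'.verts.Nonempty := ⟨i₀, hiv₀⟩
    obtain ⟨n, hn⟩ : ∃ n, F'.vcount = n + 1 := by
      refine ⟨F'.vcount - 1, ?_⟩
      have : 0 < F'.vcount := Finset.card_pos.mpr hne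
      omega
    have hn1 : 1 ≤ n := by
      have h2 : 2 ≤ F'.vcount := by
        have hc2 : ({i₀, j₀} : Finset ℕ).card = 2 := Finset.card_pair (by omega)
        have hsub2 : ({i₀, j₀} : Finset ℕ) ⊆ F'.verts := by
          intro t ht
          simp only [Finset.mem_insert, Finset.mem_singleton] at ht
          rcases ht with rfl | rfl
          exacts [hiv₀, hjv₀]
        calc 2 = ({i₀, j₀} : Finset ℕ).card := hc2.symm
          _ ≤ F'.verts.card := Finset.card_le_card hsub2
      omega
    have he : F'.ecount ≤ n * k := by
      have h1 : F'.edges.card ≤ (F'.verts.erase (F'.verts.min' hne)).card * k := by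
        apply card_le_max_charge
        intro E hE
        obtain ⟨i, j, hij, hjk, hjℓ, hmid, rfl, hiv, hjv⟩ := hedge E hE
        refine ⟨i, j, hij, hjk, rfl, Finset.mem_erase.mpr ⟨?_, hjv⟩⟩
        have := Finset.min'_le _ _ hiv
        omega
      rw [Finset.card_erase_of_mem (Finset.min'_mem _ hne)] at h1
      rw [HGraph.ecount]
      calc F'.edges.card ≤ (F'.verts.card - 1) * k := h1
        _ = n * k := by rw [show F'.verts.card = n + 1 from hn, Nat.add_sub_cancel]
    have hden : (F'.vcount : ℝ) - max 1 ((F'.verts ∩ X).card : ℝ) = (n : ℝ) + 1 - 1 := by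
      rw [hcap, hn]
      push_cast
      simp
    rw [hden]
    have hnpos : (0 : ℝ) < (n : ℝ) + 1 - 1 := by
      have : (1 : ℝ) ≤ n := by exact_mod_cast hn1
      linarith
    rw [div_le_iff₀ hnpos]
    have heR : (F'.ecount : ℝ) ≤ (n : ℝ) * k := by exact_mod_cast he
    have hnn : (0 : ℝ) ≤ 8 * (k : ℝ) ^ 3 / (ℓ : ℝ) := by positivity
    nlinarith [mul_nonneg hnn (by positivity : (0:ℝ) ≤ (n:ℝ))]
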